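/- arXiv:2602.11755 — 6 statements merged into one kernel-verified Lean document; each statement's English description precedes it below -/
import Mathlib

section
/- For all pairs k, m, n of coprime natural numbers, q_n(k) ≤ q_m(k) · q_n(m). -/
/-- `q n₁ n₂ m` is the minimum of `|x| + |y|` over integer solutions of `m = n₁·x + n₂·y`. -/
noncomputable def q (n₁ n₂ m : ℕ) : ℕ :=
  sInf {s : ℕ | ∃ x y : ℤ, (m : ℤ) = (n₁ : ℤ) * x + (n₂ : ℤ) * y ∧ s = x.natAbs + y.natAbs}

/-- `qPair n₁ n₂ m₁ m₂ = max (q_{n}(m₁)) (q_{n}(m₂))` for pairs `n = {n₁,n₂}`, `m = {m₁,m₂}`. -/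
noncomputable def qPair (n₁ n₂ m₁ m₂ : ℕ) : ℕ := max (q n₁ n₂ m₁) (q n₁ n₂ m₂)

lemma q_nonempty (n₁ n₂ m : ℕ) (hn : Nat.Coprime n₁ n₂) :
    {s : ℕ | ∃ x y : ℤ, (m : ℤ) = (n₁ : ℤ) * x + (n₂ : ℤ) * y ∧ s = x.natAbs + y.natAbs}.Nonempty := by
  have h := Nat.gcd_eq_gcd_ab n₁ n₂
  rw [hn] at h
  refine ⟨((m : ℤ) * Nat.gcdA n₁ n₂).natAbs + ((m : ℤ) * Nat.gcdB n₁ n₂).natAbs,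
    (m : ℤ) * Nat.gcdA n₁ n₂, (m : ℤ) * Nat.gcdB n₁ n₂, ?_, rfl⟩
  have : ((1 : ℕ) : ℤ) = (n₁ : ℤ) * Nat.gcdA n₁ n₂ + (n₂ : ℤ) * Nat.gcdB n₁ n₂ := h
  push_cast at this ⊢
  linear_combination (m : ℤ) * this

lemma q_attained (n₁ n₂ m : ℕ) (hn : Nat.Coprime n₁ n₂) :
    ∃ x y : ℤ, (m : ℤ) = (n₁ : ℤ) * x + (n₂ : ℤ) * y ∧ q n₁ n₂ m = x.natAbs + y.natAbs :=
  Nat.sInf_mem (q_nonempty n₁ n₂ m hn)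

lemma q_le (n₁ n₂ m : ℕ) (x y : ℤ) (h : (m : ℤ) = (n₁ : ℤ) * x + (n₂ : ℤ) * y) :
    q n₁ n₂ m ≤ x.natAbs + y.natAbs :=
  Nat.sInf_le ⟨x, y, h, rfl⟩

lemma q_mul (k m₁ m₂ n₁ n₂ : ℕ) (hm : Nat.Coprime m₁ m₂) (hn : Nat.Coprime n₁ n₂) :
    q n₁ n₂ k ≤ q m₁ m₂ k * max (q n₁ n₂ m₁) (q n₁ n₂ m₂) := by
  obtain ⟨x, y, hxy, hq⟩ := q_attained m₁ m₂ k hm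
  obtain ⟨a, b, hab, ha⟩ := q_attained n₁ n₂ m₁ hn
  obtain ⟨c, d, hcd, hc⟩ := q_attained n₁ n₂ m₂ hn
  have hk : (k : ℤ) = (n₁ : ℤ) * (x * a + y * c) + (n₂ : ℤ) * (x * b + y * d) := by
    rw [hxy, hab, hcd]; ring
  refine (q_le n₁ n₂ k _ _ hk).trans ?_
  rw [hq, ha, hc]
  set Q := max (a.natAbs + b.natAbs) (c.natAbs + d.natAbs) with hQ
  calc (x * a + y * c).natAbs + (x * b + y * d).natAbs
      ≤ (x.natAbs * a.natAbs + y.natAbs * c.natAbs)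
        + (x.natAbs * b.natAbs + y.natAbs * d.natAbs) := by
        refine Nat.add_le_add ?_ ?_ <;>
        · refine (Int.natAbs_add_le _ _).trans ?_
          simp [Int.natAbs_mul]
    _ = x.natAbs * (a.natAbs + b.natAbs) + y.natAbs * (c.natAbs + d.natAbs) := by ring
    _ ≤ x.natAbs * Q + y.natAbs * Q :=
        Nat.add_le_add (Nat.mul_le_mul_left _ (le_max_left _ _))
          (Nat.mul_le_mul_left _ (le_max_right _ _))
    _ = (x.natAbs + y.natAbs) * Q := by ring

theorem stmt_0 (k₁ k₂ m₁ m₂ n₁ n₂ : ℕ)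
    (hk₁ : 0 < k₁) (hk₂ : 0 < k₂) (hm₁ : 0 < m₁) (hm₂ : 0 < m₂) (hn₁ : 0 < n₁) (hn₂ : 0 < n₂)
    (hk : Nat.Coprime k₁ k₂) (hm : Nat.Coprime m₁ m₂) (hn : Nat.Coprime n₁ n₂) :
    qPair n₁ n₂ k₁ k₂ ≤ qPair m₁ m₂ k₁ k₂ * qPair n₁ n₂ m₁ m₂ := by
  unfold qPair
  refine max_le ?_ ?_
  · exact (q_mul k₁ m₁ m₂ n₁ n₂ hm hn).trans
      (Nat.mul_le_mul_right _ (le_max_left _ _))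
  · exact (q_mul k₂ m₁ m₂ n₁ n₂ hm hn).trans
      (Nat.mul_le_mul_right _ (le_max_right _ _))
end

section
/- Let F : ℤ → ℤ be the bi-infinite Fibonacci sequence and, for n ≥ 1, let f_n = {F(n), F(n+1)}. For all natural numbers m, n ≥ 1, q_{f_n}(F(m)) ≤ |F(m-n-1)| + |F(m-n)|; explicitly, q_{f_n}(F(m)) ≤ F(m-n+1) if m ≥ n, and q_{f_n}(F(m)) ≤ F(n-m+2) if m ≤ n. -/
section helpers
variable (F : ℤ → ℤ) (h0 : F 0 = 0) (h1 : F 1 = 1)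
    (hrec : ∀ n : ℤ, F (n + 2) = F (n + 1) + F n)
include h0 h1 hrec

lemma aux_Fnat : ∀ k : ℕ, F k = Nat.fib k := by
  intro k
  induction k using Nat.twoStepInduction with
  | zero => simpa using h0
  | one => simpa using h1
  | more k ih1 ih2 =>
    have e := hrec (k : ℤ)
    have : ((k + 2 : ℕ) : ℤ) = (k : ℤ) + 2 := by push_cast; ring
    rw [this, e, Nat.fib_add_two]
    push_cast
    rw [show ((k+1:ℕ):ℤ) = (k:ℤ)+1 by push_cast; ring] at ih2
    linarith

lemma aux_Fneg : ∀ k : ℕ, F (-(k : ℤ)) = (-1)^(k+1) * Nat.fib k := by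
  have hm1 : F (-1) = 1 := by have := hrec (-1); norm_num at this; linarith
  intro k
  induction k using Nat.twoStepInduction with
  | zero => simpa using h0
  | one => simpa using hm1
  | more k ih1 ih2 =>
    have e := hrec (-(k:ℤ) - 2)
    have h2 : (-(k:ℤ) - 2) + 2 = -(k:ℤ) := by ring
    have h1' : (-(k:ℤ) - 2) + 1 = -((k:ℤ)+1) := by ring
    rw [h2, h1'] at e
    rw [show (-(((k+2:ℕ)):ℤ)) = -(k:ℤ) - 2 by push_cast; ring]
    rw [show (-(((k+1:ℕ)):ℤ)) = -((k:ℤ)+1) by push_cast; ring] at ih2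
    have hfib : (Nat.fib (k+2) : ℤ) = Nat.fib (k+1) + Nat.fib k := by
      rw [Nat.fib_add_two]; push_cast; ring
    have : F (-(k:ℤ) - 2) = F (-(k:ℤ)) - F (-((k:ℤ)+1)) := by linarith
    rw [this, ih1, ih2, hfib]
    ring

set_option linter.unreachableTactic false in
set_option linter.unusedTactic false in
lemma aux_add (a : ℤ) :
    ∀ b : ℤ, F (a + b + 1) = F (a + 1) * F (b + 1) + F a * F b := by
  have hP0 : F (a + 0 + 1) = F (a + 1) * F (0 + 1) + F a * F 0 := by
    norm_num [h0, h1]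
  have hP1 : F (a + 1 + 1) = F (a + 1) * F (1 + 1) + F a * F 1 := by
    have ha := hrec a
    have e2 : F 2 = 1 := by have := hrec 0; norm_num [h0, h1] at this; linarith
    rw [show a + 1 + 1 = a + 2 by ring, ha, show (1:ℤ) + 1 = 2 by norm_num, e2, h1]; ring
  have up : ∀ b : ℤ, F (a + b + 1) = F (a + 1) * F (b + 1) + F a * F b →
      F (a + (b+1) + 1) = F (a + 1) * F ((b+1) + 1) + F a * F (b+1) →
      F (a + (b+2) + 1) = F (a + 1) * F ((b+2) + 1) + F a * F (b+2) := by
    intro b hb1 hb2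
    have e1 := hrec (a + b + 1)
    have e2 := hrec (b + 1)
    have e3 := hrec b
    ring_nf at hb1 hb2 e1 e2 e3 ⊢
    linear_combination e1 + hb1 + hb2 - F (1+a) * e2 - F a * e3
  have down : ∀ b : ℤ, F (a + (b+1) + 1) = F (a + 1) * F ((b+1) + 1) + F a * F (b+1) →
      F (a + (b+2) + 1) = F (a + 1) * F ((b+2) + 1) + F a * F (b+2) →
      F (a + b + 1) = F (a + 1) * F (b + 1) + F a * F b := by
    intro b hb1 hb2
    have e1 := hrec (a + b + 1)
    have e2 := hrec (b + 1)
    have e3 := hrec b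
    ring_nf at hb1 hb2 e1 e2 e3 ⊢
    linear_combination hb2 - hb1 - e1 + F (1+a) * e2 + F a * e3
  have upN : ∀ j : ℕ, F (a + j + 1) = F (a + 1) * F ((j:ℤ) + 1) + F a * F j := by
    intro j
    induction j using Nat.twoStepInduction with
    | zero => simpa using hP0
    | one => simpa using hP1
    | more k ih1 ih2 =>
      have := up k ih1 (by push_cast at ih2 ⊢; convert ih2 using 3 <;> ring)
      push_cast
      convert this using 3 <;> push_cast <;> ring
  have downN : ∀ j : ℕ, F (a + (-(j:ℤ)) + 1) = F (a + 1) * F (-(j:ℤ) + 1) + F a * F (-(j:ℤ)) := by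
    intro j
    induction j using Nat.twoStepInduction with
    | zero => simpa using hP0
    | one =>
      have := down (-1) (by norm_num; simpa using hP0) (by norm_num; simpa using hP1)
      push_cast
      convert this using 3 <;> ring
    | more k ih1 ih2 =>
      have := down (-(k:ℤ) - 2)
        (by convert ih2 using 3 <;> push_cast <;> ring)
        (by convert ih1 using 3 <;> push_cast <;> ring)
      convert this using 3 <;> push_cast <;> ring
  intro b
  rcases le_or_gt 0 b with h | h
  · obtain ⟨j, rfl⟩ := Int.eq_ofNat_of_zero_le h
    exact upN j
  · have h' : 0 ≤ -b := by linarith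
    obtain ⟨j, hj⟩ := Int.eq_ofNat_of_zero_le h'
    have : b = -(j:ℤ) := by linarith
    rw [this]; exact downN j

end helpers

/-- For the bi-infinite Fibonacci sequence `F : ℤ → ℤ`, with `f_n = {F(n), F(n+1)}` and
`m, n ≥ 1`: `q_{f_n}(F(m)) ≤ |F(m-n-1)| + |F(m-n)|`, and this bound equals
`F(m-n+1)` if `m ≥ n` and `F(n-m+2)` if `m ≤ n`. -/
theorem stmt_8 (F : ℤ → ℤ) (h0 : F 0 = 0) (h1 : F 1 = 1)
    (hrec : ∀ n : ℤ, F (n + 2) = F (n + 1) + F n) (m n : ℕ) (hm : 1 ≤ m) (hn : 1 ≤ n) :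
    q (F (n : ℤ)).toNat (F ((n : ℤ) + 1)).toNat (F (m : ℤ)).toNat ≤
      (F ((m : ℤ) - n - 1)).natAbs + (F ((m : ℤ) - n)).natAbs ∧
    (n ≤ m → ((F ((m : ℤ) - n - 1)).natAbs + (F ((m : ℤ) - n)).natAbs : ℤ)
      = F ((m : ℤ) - n + 1)) ∧
    (m ≤ n → ((F ((m : ℤ) - n - 1)).natAbs + (F ((m : ℤ) - n)).natAbs : ℤ)
      = F ((n : ℤ) - m + 2)) := by
  have Fnat := aux_Fnat F h0 h1 hrec
  have Fneg := aux_Fneg F h0 h1 hrec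
  have hm1 : F (-1) = 1 := by have := hrec (-1); norm_num at this; linarith
  have hnonneg : ∀ k : ℕ, 0 ≤ F k := fun k => by rw [Fnat k]; positivity
  refine ⟨?_, ?_, ?_⟩
  · -- the q bound
    apply Nat.sInf_le
    refine ⟨F ((m:ℤ) - n - 1), F ((m:ℤ) - n), ?_, rfl⟩
    have hn1 : 0 ≤ F ((n:ℤ) + 1) := by
      have := hnonneg (n+1)
      rwa [show ((n+1:ℕ):ℤ) = (n:ℤ)+1 by push_cast; ring] at this
    rw [Int.toNat_of_nonneg (hnonneg m), Int.toNat_of_nonneg (hnonneg n),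
      Int.toNat_of_nonneg hn1]
    have key := aux_add F h0 h1 hrec (n:ℤ) ((m:ℤ) - n - 1)
    rw [show (n:ℤ) + ((m:ℤ) - n - 1) + 1 = (m:ℤ) by ring,
        show ((m:ℤ) - n - 1) + 1 = (m:ℤ) - n by ring] at key
    rw [key]; ring
  · -- case n ≤ m
    intro hle
    obtain ⟨d, rfl⟩ : ∃ d : ℕ, m = n + d := ⟨m - n, by omega⟩
    rcases d with _ | e
    · rw [show ((n + 0 : ℕ) : ℤ) - n - 1 = -1 by push_cast; ring,
          show ((n + 0 : ℕ) : ℤ) - n = 0 by push_cast; ring,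
          hm1, h0]
      norm_num [h1]
    · rw [show ((n + (e+1) : ℕ) : ℤ) - n - 1 = ((e:ℕ):ℤ) by push_cast; ring,
          show ((n + (e+1) : ℕ) : ℤ) - n = ((e+1:ℕ):ℤ) by push_cast; ring,
          Fnat e, Fnat (e+1),
          show ((e+1:ℕ):ℤ) + 1 = ((e+2:ℕ):ℤ) by push_cast; ring, Fnat (e+2)]
      simp only [Int.natAbs_natCast]
      rw [Nat.fib_add_two]
      push_cast; ring
  · -- case m ≤ n
    intro hle
    obtain ⟨k, rfl⟩ : ∃ k : ℕ, n = m + k := ⟨n - m, by omega⟩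
    rw [show ((m:ℕ):ℤ) - ((m + k : ℕ):ℤ) - 1 = -(((k+1:ℕ)):ℤ) by push_cast; ring,
        show ((m:ℕ):ℤ) - ((m + k : ℕ):ℤ) = -((k:ℕ):ℤ) by push_cast; ring,
        show ((m + k : ℕ):ℤ) - ((m:ℕ):ℤ) + 2 = ((k+2:ℕ):ℤ) by push_cast; ring,
        Fneg (k+1), Fneg k, Fnat (k+2)]
    simp only [Int.natAbs_mul, Int.natAbs_pow, Int.natAbs_neg, Int.natAbs_one, one_pow,
      one_mul, Int.natAbs_natCast]
    rw [Nat.fib_add_two]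
    push_cast; ring
end

section
/- For all natural numbers m > n ≥ 1, log_φ q_{f_n}(f_m) ≥ m - n - 1, where f_k = {F_k, F_{k+1}} and φ = (1+√5)/2. -/
/-!
Since `φ^(k-1) ≤ F_{k+1} ≤ φ^k`, it suffices to bound `q_{f_n}(F_{m+1})` below by
`F_{m+1} / F_{n+1}`. This holds for any coprime pair: if `m = n₁ x + n₂ y`, then
`m ≤ max n₁ n₂ · (|x| + |y|)`.
-/

open Real
open scoped goldenRatio

lemma exists_q_eq {n₁ n₂ : ℕ} (h : Nat.Coprime n₁ n₂) (m : ℕ) :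
    ∃ x y : ℤ, (m : ℤ) = n₁ * x + n₂ * y ∧ q n₁ n₂ m = x.natAbs + y.natAbs := by
  obtain ⟨u, v, huv⟩ := Nat.isCoprime_iff_coprime.mpr h
  refine Nat.sInf_mem (s := {s : ℕ | ∃ x y : ℤ, (m : ℤ) = n₁ * x + n₂ * y ∧
    s = x.natAbs + y.natAbs}) ⟨_, m * u, m * v, ?_, rfl⟩
  linear_combination -(m : ℤ) * huv

lemma le_max_mul_q {n₁ n₂ : ℕ} (h : Nat.Coprime n₁ n₂) (m : ℕ) :
    m ≤ max n₁ n₂ * q n₁ n₂ m := by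
  obtain ⟨x, y, hm, hq⟩ := exists_q_eq h m
  rw [hq]
  zify
  calc (m : ℤ) = n₁ * x + n₂ * y := hm
    _ ≤ n₁ * |x| + n₂ * |y| := by
        gcongr <;> exact le_abs_self _
    _ ≤ max (n₁ : ℤ) n₂ * |x| + max (n₁ : ℤ) n₂ * |y| := by
        gcongr
        exacts [le_max_left _ _, le_max_right _ _]
    _ = max (n₁ : ℤ) n₂ * (|x| + |y|) := by ring

lemma fib_succ_le_goldenRatio_pow (n : ℕ) : (Nat.fib (n + 1) : ℝ) ≤ φ ^ n := by
  rw [← fib_succ_sub_goldenConj_mul_fib]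
  have : ψ * Nat.fib n ≤ 0 := mul_nonpos_of_nonpos_of_nonneg goldenConj_neg.le (Nat.cast_nonneg _)
  linarith

lemma goldenRatio_pow_le_fib_add_two (n : ℕ) : φ ^ n ≤ (Nat.fib (n + 2) : ℝ) := by
  have h := goldenRatio_mul_fib_succ_add_fib n
  have : φ ^ (n + 1) ≤ φ * Nat.fib (n + 2) := by
    rw [← h, Nat.fib_add_two, Nat.cast_add, mul_add]
    linarith [le_mul_of_one_le_left (Nat.cast_nonneg (Nat.fib n)) one_lt_goldenRatio.le]
  rw [pow_succ'] at this
  exact le_of_mul_le_mul_left this goldenRatio_pos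

lemma goldenRatio_pow_le_q_fib {m n : ℕ} (hmn : n < m) :
    φ ^ (m - n - 1) ≤ (q (Nat.fib n) (Nat.fib (n + 1)) (Nat.fib (m + 1)) : ℝ) := by
  have hq := le_max_mul_q (Nat.fib_coprime_fib_succ n) (Nat.fib (m + 1))
  rw [max_eq_right Nat.fib_le_fib_succ] at hq
  have hφn : 0 < φ ^ n := pow_pos goldenRatio_pos n
  refine le_of_mul_le_mul_left ?_ hφn
  calc φ ^ n * φ ^ (m - n - 1) = φ ^ (m - 1) := by rw [← pow_add]; congr 1; omega
    _ ≤ Nat.fib (m - 1 + 2) := goldenRatio_pow_le_fib_add_two _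
    _ = Nat.fib (m + 1) := by congr 2; omega
    _ ≤ Nat.fib (n + 1) * q (Nat.fib n) (Nat.fib (n + 1)) (Nat.fib (m + 1)) := by exact_mod_cast hq
    _ ≤ φ ^ n * q (Nat.fib n) (Nat.fib (n + 1)) (Nat.fib (m + 1)) := by
        gcongr; exact fib_succ_le_goldenRatio_pow n

theorem stmt_9_general (m n : ℕ) (hmn : n < m) :
    (m : ℝ) - n - 1 ≤ Real.logb ((1 + Real.sqrt 5) / 2)
      (qPair (Nat.fib n) (Nat.fib (n + 1)) (Nat.fib m) (Nat.fib (m + 1))) := by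
  have hq : φ ^ (m - n - 1) ≤
      (qPair (Nat.fib n) (Nat.fib (n + 1)) (Nat.fib m) (Nat.fib (m + 1)) : ℝ) :=
    (goldenRatio_pow_le_q_fib hmn).trans (by exact_mod_cast le_max_right _ _)
  have hpos : 0 < (qPair (Nat.fib n) (Nat.fib (n + 1)) (Nat.fib m) (Nat.fib (m + 1)) : ℝ) :=
    (pow_pos goldenRatio_pos _).trans_le hq
  rw [← goldenRatio, le_logb_iff_rpow_le one_lt_goldenRatio hpos]
  have hexp : (m : ℝ) - n - 1 = (m - n - 1 : ℕ) := by
    rw [Nat.cast_sub (by omega), Nat.cast_sub hmn.le, Nat.cast_one]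
  rwa [hexp, rpow_natCast]

/-- For `m > n ≥ 1`, `log_φ q_{f_n}(f_m) ≥ m - n - 1`, where `f_k = {F_k, F_{k+1}}`. -/
theorem stmt_9 (m n : ℕ) (hn : 1 ≤ n) (hmn : n < m) :
    (m : ℝ) - n - 1 ≤ Real.logb ((1 + Real.sqrt 5) / 2)
      (qPair (Nat.fib n) (Nat.fib (n + 1)) (Nat.fib m) (Nat.fib (m + 1))) :=
  stmt_9_general m n hmn
end

section
/- Let k ≥ 1 and let F_{k,n} denote the n-th k-Fibonacci number; for n ≥ 1 let f_{k,n} = {F_{k,n}, F_{k,n+1}} (a coprime pair). For all natural numbers m > n ≥ 1, q_{f_{k,n}}(F_{k,m}) ≥ F_{k,m} / F_{k,n+1}. -/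
/-- The `k`-Fibonacci numbers: `F_{k,0} = 0`, `F_{k,1} = 1`,
`F_{k,n+2} = k·F_{k,n+1} + F_{k,n}`. -/
def kfib (k : ℕ) : ℕ → ℕ
  | 0 => 0
  | 1 => 1
  | n + 2 => k * kfib k (n + 1) + kfib k n

lemma kfib_pos (k : ℕ) (hk : 1 ≤ k) : ∀ n, 1 ≤ n → 0 < kfib k n
  | 1, _ => by simp [kfib]
  | n + 2, _ => by
    have h := kfib_pos k hk (n + 1) (by omega)
    have : 0 < k * kfib k (n + 1) := Nat.mul_pos hk h
    show 0 < k * kfib k (n + 1) + kfib k n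
    omega

lemma kfib_le_succ (k : ℕ) (hk : 1 ≤ k) : ∀ n, kfib k n ≤ kfib k (n + 1)
  | 0 => by simp [kfib]
  | n + 1 => by
    show kfib k (n + 1) ≤ k * kfib k (n + 1) + kfib k n
    nlinarith [Nat.zero_le (kfib k n), Nat.zero_le (kfib k (n+1))]

lemma kfib_coprime (k : ℕ) : ∀ n, Nat.Coprime (kfib k n) (kfib k (n + 1))
  | 0 => by simp [kfib, Nat.Coprime]
  | n + 1 => by
    have ih := kfib_coprime k n
    show Nat.gcd (kfib k (n + 1)) (k * kfib k (n + 1) + kfib k n) = 1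
    rw [Nat.add_comm (k * kfib k (n + 1)) (kfib k n), Nat.gcd_add_mul_right_right,
      Nat.gcd_comm]
    exact ih

/-- For `k ≥ 1`, `f_{k,n} = {F_{k,n}, F_{k,n+1}}`, and `m > n ≥ 1`,
`q_{f_{k,n}}(F_{k,m}) ≥ F_{k,m} / F_{k,n+1}`. -/
theorem stmt_15 (k : ℕ) (hk : 1 ≤ k) (m n : ℕ) (hn : 1 ≤ n) (hmn : n < m) :
    (kfib k m : ℝ) / (kfib k (n + 1) : ℝ) ≤
      (q (kfib k n) (kfib k (n + 1)) (kfib k m) : ℝ) := by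
  set S := {s : ℕ | ∃ x y : ℤ, ((kfib k m : ℕ) : ℤ) = (kfib k n : ℤ) * x +
      (kfib k (n + 1) : ℤ) * y ∧ s = x.natAbs + y.natAbs} with hS
  have hcop := kfib_coprime k n
  have hne : S.Nonempty := by
    have hb := Nat.gcd_eq_gcd_ab (kfib k n) (kfib k (n + 1))
    rw [hcop] at hb
    refine ⟨((Nat.gcdA (kfib k n) (kfib k (n+1))) * kfib k m).natAbs +
      ((Nat.gcdB (kfib k n) (kfib k (n+1))) * kfib k m).natAbs,
      (Nat.gcdA (kfib k n) (kfib k (n+1))) * kfib k m,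
      (Nat.gcdB (kfib k n) (kfib k (n+1))) * kfib k m, ?_, rfl⟩
    push_cast at hb ⊢
    nlinarith [hb]
  have hmem : q (kfib k n) (kfib k (n + 1)) (kfib k m) ∈ S := Nat.sInf_mem hne
  obtain ⟨x, y, hxy, hs⟩ := hmem
  have h1 : 0 < kfib k (n + 1) := kfib_pos k hk (n + 1) (by omega)
  have h1R : (0 : ℝ) < (kfib k (n + 1) : ℝ) := by exact_mod_cast h1
  rw [div_le_iff₀ h1R]
  have hle : (kfib k n : ℝ) ≤ (kfib k (n + 1) : ℝ) := by
    exact_mod_cast kfib_le_succ k hk n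
  have hxabs : (x : ℝ) ≤ |(x : ℝ)| := le_abs_self _
  have hyabs : (y : ℝ) ≤ |(y : ℝ)| := le_abs_self _
  have hnn : (0 : ℝ) ≤ (kfib k n : ℝ) := by positivity
  have key : (kfib k m : ℝ) = (kfib k n : ℝ) * x + (kfib k (n + 1) : ℝ) * y := by
    exact_mod_cast hxy
  have hxa : |(x : ℝ)| = (x.natAbs : ℝ) := by
    rw [Nat.cast_natAbs, Int.cast_abs]
  have hya : |(y : ℝ)| = (y.natAbs : ℝ) := by
    rw [Nat.cast_natAbs, Int.cast_abs]
  have hsR : (q (kfib k n) (kfib k (n + 1)) (kfib k m) : ℝ) =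
      (x.natAbs : ℝ) + (y.natAbs : ℝ) := by exact_mod_cast hs
  rw [hsR]
  calc (kfib k m : ℝ) = (kfib k n : ℝ) * x + (kfib k (n + 1) : ℝ) * y := key
    _ ≤ (kfib k n : ℝ) * |(x : ℝ)| + (kfib k (n + 1) : ℝ) * |(y : ℝ)| := by
        gcongr <;> positivity
    _ ≤ (kfib k (n + 1) : ℝ) * |(x : ℝ)| + (kfib k (n + 1) : ℝ) * |(y : ℝ)| := by
        have hx0 := abs_nonneg (x : ℝ)
        nlinarith
    _ = ((x.natAbs : ℝ) + (y.natAbs : ℝ)) * (kfib k (n + 1) : ℝ) := by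
        rw [hxa, hya]; ring
end

section
/- Let k ≥ 1 and let F_k : ℤ → ℤ be the bi-infinite k-Fibonacci sequence; for n ≥ 1 let f_{k,n} = {F_k(n), F_k(n+1)}. For all natural numbers m, n ≥ 1, q_{f_{k,n}}(F_k(m)) ≤ |F_k(m-n-1)| + |F_k(m-n)|; explicitly, this bound equals F_k(m-n-1) + F_k(m-n) if m ≥ n, and F_k(n-m) + F_k(n-m+1) if m ≤ n. -/
lemma aux_nonneg (k : ℕ) (hk : 1 ≤ k) (F : ℤ → ℤ) (h0 : F 0 = 0) (h1 : F 1 = 1)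
    (hrec : ∀ n : ℤ, F (n + 2) = k * F (n + 1) + F n) :
    ∀ t : ℕ, 0 ≤ F t ∧ 1 ≤ F ((t : ℤ) + 1) := by
  intro t
  induction t with
  | zero => simp [h0, h1]
  | succ t ih =>
    obtain ⟨hA, hB⟩ := ih
    have hk' : (1:ℤ) ≤ k := by exact_mod_cast hk
    have hr := hrec t
    constructor
    · push_cast; linarith
    · push_cast
      rw [show (t:ℤ) + 1 + 1 = (t:ℤ) + 2 by ring, hr]
      nlinarith

lemma aux_add_s16 (k : ℕ) (F : ℤ → ℤ) (h0 : F 0 = 0) (h1 : F 1 = 1)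
    (hrec : ∀ n : ℤ, F (n + 2) = k * F (n + 1) + F n) :
    ∀ t : ℕ, ∀ s : ℤ, F (s + t) = F (s - 1) * F t + F s * F ((t : ℤ) + 1) := by
  have hF2 : F 2 = k := by have := hrec 0; simp [h0, h1] at this; linarith
  have hstep : ∀ s : ℤ, F (s + 1) = k * F s + F (s - 1) := by
    intro s
    have := hrec (s - 1)
    rw [show s - 1 + 2 = s + 1 by ring, show s - 1 + 1 = s by ring] at this
    exact this
  have key : ∀ t : ℕ,
      (∀ s : ℤ, F (s + t) = F (s - 1) * F t + F s * F ((t : ℤ) + 1)) ∧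
      (∀ s : ℤ, F (s + ((t : ℤ) + 1)) = F (s - 1) * F ((t:ℤ) + 1) + F s * F ((t : ℤ) + 2)) := by
    intro t
    induction t with
    | zero =>
      constructor
      · intro s; simp [h0, h1]
      · intro s
        push_cast
        rw [h1, hF2]
        have := hstep s
        linarith
    | succ t ih =>
      obtain ⟨hA, hB⟩ := ih
      constructor
      · intro s
        have := hB s
        push_cast
        rw [show (t:ℤ) + 1 + 1 = (t:ℤ) + 2 by ring]
        exact this
      · intro s
        push_cast
        rw [show s + ((t:ℤ) + 1 + 1) = (s + t) + 2 by ring,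
            show (t:ℤ) + 1 + 1 = (t:ℤ) + 2 by ring,
            show (t:ℤ) + 1 + 2 = (t:ℤ) + 3 by ring,
            hrec (s + t)]
        have e1 := hA s
        have e2 := hB s
        rw [show s + ((t:ℤ) + 1) = s + t + 1 by ring] at e2
        have hr1' : F ((t:ℤ) + 2) = k * F ((t:ℤ) + 1) + F t := hrec t
        have hr2' : F ((t:ℤ) + 3) = k * F ((t:ℤ) + 2) + F ((t:ℤ) + 1) := by
          have := hrec ((t:ℤ) + 1)
          rw [show (t:ℤ) + 1 + 2 = (t:ℤ) + 3 by ring,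
              show (t:ℤ) + 1 + 1 = (t:ℤ) + 2 by ring] at this
          exact this
        rw [e2, e1, hr2', hr1']
        ring
  intro t s
  exact (key t).1 s

lemma aux_neg (k : ℕ) (F : ℤ → ℤ) (h0 : F 0 = 0) (h1 : F 1 = 1)
    (hrec : ∀ n : ℤ, F (n + 2) = k * F (n + 1) + F n) :
    ∀ t : ℕ, F (-(t : ℤ)) = (-1 : ℤ) ^ (t + 1) * F t := by
  have hFm1 : F (-1) = 1 := by
    have := hrec (-1)
    norm_num [h0, h1] at this
    linarith
  have key : ∀ t : ℕ, F (-(t : ℤ)) = (-1 : ℤ) ^ (t + 1) * F t ∧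
      F (-((t : ℤ) + 1)) = (-1 : ℤ) ^ (t + 2) * F ((t:ℤ) + 1) := by
    intro t
    induction t with
    | zero => simp [h0, h1, hFm1]
    | succ t ih =>
      obtain ⟨hA, hB⟩ := ih
      constructor
      · push_cast
        exact hB
      · have hr := hrec (-(t:ℤ) - 2)
        rw [show -(t:ℤ) - 2 + 2 = -(t:ℤ) by ring,
            show -(t:ℤ) - 2 + 1 = -((t:ℤ) + 1) by ring] at hr
        have hfwd : F ((t:ℤ) + 2) = k * F ((t:ℤ) + 1) + F t := hrec t
        push_cast
        rw [show -((t:ℤ) + 1 + 1) = -(t:ℤ) - 2 by ring]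
        have hval : F (-(t:ℤ) - 2) = F (-(t:ℤ)) - k * F (-((t:ℤ) + 1)) := by linarith
        rw [hval, hA, hB, show (t:ℤ) + 1 + 1 = (t:ℤ) + 2 by ring, hfwd]
        rw [pow_succ, pow_succ, pow_succ]
        ring
  intro t; exact (key t).1

/-- For `k ≥ 1`, the bi-infinite `k`-Fibonacci sequence `F : ℤ → ℤ`,
`f_{k,n} = {F(n), F(n+1)}`, and `m, n ≥ 1`:
`q_{f_{k,n}}(F(m)) ≤ |F(m-n-1)| + |F(m-n)|`, and this bound equals
`F(m-n-1) + F(m-n)` if `m ≥ n`, and `F(n-m) + F(n-m+1)` if `m ≤ n`. -/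
theorem stmt_16 (k : ℕ) (hk : 1 ≤ k) (F : ℤ → ℤ) (h0 : F 0 = 0) (h1 : F 1 = 1)
    (hrec : ∀ n : ℤ, F (n + 2) = k * F (n + 1) + F n) (m n : ℕ) (hm : 1 ≤ m) (hn : 1 ≤ n) :
    q (F (n : ℤ)).toNat (F ((n : ℤ) + 1)).toNat (F (m : ℤ)).toNat ≤
      (F ((m : ℤ) - n - 1)).natAbs + (F ((m : ℤ) - n)).natAbs ∧
    (n ≤ m → ((F ((m : ℤ) - n - 1)).natAbs + (F ((m : ℤ) - n)).natAbs : ℤ)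
      = F ((m : ℤ) - n - 1) + F ((m : ℤ) - n)) ∧
    (m ≤ n → ((F ((m : ℤ) - n - 1)).natAbs + (F ((m : ℤ) - n)).natAbs : ℤ)
      = F ((n : ℤ) - m) + F ((n : ℤ) - m + 1)) := by
  have hpos := aux_nonneg k hk F h0 h1 hrec
  have hFn : 0 ≤ F (n : ℤ) := (hpos n).1
  have hFn1 : 0 ≤ F ((n : ℤ) + 1) := le_trans zero_le_one (hpos n).2
  have hFm : 0 ≤ F (m : ℤ) := (hpos m).1
  have hFm1 : F (-1) = 1 := by
    have := hrec (-1)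
    norm_num [h0, h1] at this
    linarith
  have hid : F (m : ℤ) = F ((m : ℤ) - n - 1) * F (n : ℤ) + F ((m : ℤ) - n) * F ((n : ℤ) + 1) := by
    have := aux_add_s16 k F h0 h1 hrec n ((m : ℤ) - n)
    rw [show (m : ℤ) - n + n = m by ring] at this
    exact this
  refine ⟨?_, ?_, ?_⟩
  · apply Nat.sInf_le
    refine ⟨F ((m : ℤ) - n - 1), F ((m : ℤ) - n), ?_, rfl⟩
    rw [Int.toNat_of_nonneg hFm, Int.toNat_of_nonneg hFn, Int.toNat_of_nonneg hFn1]
    linarith [hid]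
  · intro h
    have hge : 0 ≤ F ((m : ℤ) - n) := by
      have : (m : ℤ) - n = ((m - n : ℕ) : ℤ) := by push_cast [Nat.cast_sub h]; ring
      rw [this]; exact (hpos _).1
    have hge1 : 0 ≤ F ((m : ℤ) - n - 1) := by
      rcases eq_or_lt_of_le h with heq | hlt
      · rw [show (m : ℤ) - n - 1 = -1 by rw [← heq]; ring, hFm1]; norm_num
      · have : (m : ℤ) - n - 1 = ((m - n - 1 : ℕ) : ℤ) := by
          have : n + 1 ≤ m := hlt
          push_cast [Nat.cast_sub h, Nat.cast_sub (by omega : 1 ≤ m - n)]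
          ring
        rw [this]; exact (hpos _).1
    rw [Int.natAbs_of_nonneg hge1, Int.natAbs_of_nonneg hge]
  · intro h
    have e1 : (m : ℤ) - n - 1 = -((n - m + 1 : ℕ) : ℤ) := by push_cast [Nat.cast_sub h]; ring
    have e2 : (m : ℤ) - n = -((n - m : ℕ) : ℤ) := by push_cast [Nat.cast_sub h]; ring
    have a1 : (F ((m : ℤ) - n - 1)).natAbs = (F ((n - m + 1 : ℕ) : ℤ)).natAbs := by
      rw [e1, aux_neg k F h0 h1 hrec, Int.natAbs_mul]
      simp
    have a2 : (F ((m : ℤ) - n)).natAbs = (F ((n - m : ℕ) : ℤ)).natAbs := by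
      rw [e2, aux_neg k F h0 h1 hrec, Int.natAbs_mul]
      simp
    have g1 : 0 ≤ F ((n - m + 1 : ℕ) : ℤ) := (hpos _).1
    have g2 : 0 ≤ F ((n - m : ℕ) : ℤ) := (hpos _).1
    have e3 : ((n - m : ℕ) : ℤ) = (n : ℤ) - m := by push_cast [Nat.cast_sub h]; ring
    have e4 : ((n - m + 1 : ℕ) : ℤ) = (n : ℤ) - m + 1 := by push_cast [Nat.cast_sub h]; ring
    rw [a1, a2, Int.natAbs_of_nonneg g1, Int.natAbs_of_nonneg g2, e3, e4]
    ring
end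

section
/- Let ℓ ≥ 2, let F_n denote the n-th Fibonacci number, and for n ≥ 1 let f_n^ℓ = {F_n, F_{n+1}, …, F_{n+ℓ-1}} ∈ X^ℓ. For all natural numbers m > n ≥ 1 and all i with 0 ≤ i ≤ ℓ-1 such that m + i ≥ n + ℓ, one has q_{f_n^ℓ}(F_{m+i}) ≥ F_{m+i} / F_{n+ℓ-1} and q_{f_n^ℓ}(F_{m+i}) ≤ F_{m+i-n-ℓ+3} ≤ F_{m-n+2}. -/
/-- `Q s m` is the minimum of `∑ |xᵢ|` over integer solutions of `m = ∑_{i ∈ s} i·xᵢ`. -/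
noncomputable def Q (s : Finset ℕ) (m : ℕ) : ℕ :=
  sInf {t : ℕ | ∃ x : ℕ → ℤ, (m : ℤ) = ∑ i ∈ s, (i : ℤ) * x i ∧ t = ∑ i ∈ s, (x i).natAbs}

/-- `fibSet n ℓ = {F_n, F_{n+1}, …, F_{n+ℓ-1}}` as a set of natural numbers. -/
def fibSet (n ℓ : ℕ) : Finset ℕ := (Finset.range ℓ).image fun i => Nat.fib (n + i)

/-- For `ℓ ≥ 2`, `f_n^ℓ = {F_n, …, F_{n+ℓ-1}}`, `m > n ≥ 1`, and `0 ≤ i ≤ ℓ-1` with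
`m + i ≥ n + ℓ`: `q_{f_n^ℓ}(F_{m+i})` ≥ F_{m+i} / F_{n+ℓ-1}` and
`q_{f_n^ℓ}(F_{m+i}) ≤ F_{m+i-n-ℓ+3} ≤ F_{m-n+2}`. -/
theorem stmt_18 (ℓ : ℕ) (hℓ : 2 ≤ ℓ) (m n : ℕ) (hn : 1 ≤ n) (hmn : n < m)
    (i : ℕ) (hi : i ≤ ℓ - 1) (hge : n + ℓ ≤ m + i) :
    (Nat.fib (m + i) : ℝ) / (Nat.fib (n + ℓ - 1) : ℝ) ≤ (Q (fibSet n ℓ) (Nat.fib (m + i)) : ℝ) ∧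
    Q (fibSet n ℓ) (Nat.fib (m + i)) ≤ Nat.fib (m + i - n - ℓ + 3) ∧
    Nat.fib (m + i - n - ℓ + 3) ≤ Nat.fib (m - n + 2) := by
  set M := m + i with hMdef
  have hMge : n + ℓ ≤ M := hge
  have hfibpos : 0 < Nat.fib (n + ℓ - 1) := Nat.fib_pos.mpr (by omega)
  set S := {t : ℕ | ∃ x : ℕ → ℤ, ((Nat.fib M : ℕ) : ℤ) = ∑ k ∈ fibSet n ℓ, (k : ℤ) * x k ∧
      t = ∑ k ∈ fibSet n ℓ, (x k).natAbs} with hSdef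
  have hQdef : Q (fibSet n ℓ) (Nat.fib M) = sInf S := rfl
  -- upper bound witness
  have hmem : Nat.fib (M - n - ℓ + 3) ∈ S := by
    rcases Nat.lt_or_ge (n + ℓ) 4 with h3 | h4
    · -- n = 1, ℓ = 2
      have hn1 : n = 1 := by omega
      have hl2 : ℓ = 2 := by omega
      subst hn1 hl2
      have hs : fibSet 1 2 = {1} := by decide
      refine ⟨fun k => if k = 1 then (Nat.fib M : ℤ) else 0, ?_, ?_⟩
      · rw [hs]; simp
      · rw [hs]
        simp only [Finset.sum_singleton, if_pos rfl, Int.natAbs_natCast]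
        congr 1
        omega
    · set a := Nat.fib (n + ℓ - 2) with hadef
      set b := Nat.fib (n + ℓ - 1) with hbdef
      set d := M - n - ℓ + 1 with hddef
      have hab : a < b := by
        have h := Nat.fib_lt_fib_succ (n := n + ℓ - 2) (by omega)
        have he : n + ℓ - 2 + 1 = n + ℓ - 1 := by omega
        rwa [he] at h
      have ha : a ∈ fibSet n ℓ := by
        refine Finset.mem_image.2 ⟨ℓ - 2, Finset.mem_range.2 (by omega), ?_⟩
        rw [hadef]; congr 1; omega
      have hb : b ∈ fibSet n ℓ := by
        refine Finset.mem_image.2 ⟨ℓ - 1, Finset.mem_range.2 (by omega), ?_⟩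
        rw [hbdef]; congr 1; omega
      have hsub : ({a, b} : Finset ℕ) ⊆ fibSet n ℓ := by
        intro k hk
        rcases Finset.mem_insert.1 hk with rfl | hk
        · exact ha
        · rw [Finset.mem_singleton.1 hk]; exact hb
      set x : ℕ → ℤ := fun k => if k = b then (Nat.fib (d + 1) : ℤ)
        else if k = a then (Nat.fib d : ℤ) else 0 with hxdef
      have hx0 : ∀ k ∈ fibSet n ℓ, k ∉ ({a, b} : Finset ℕ) → x k = 0 := by
        intro k _ hk
        simp only [Finset.mem_insert, Finset.mem_singleton, not_or] at hk
        simp [hxdef, hk.1, hk.2]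
      have hfib : Nat.fib M = Nat.fib d * a + Nat.fib (d + 1) * b := by
        have h := Nat.fib_add d (n + ℓ - 2)
        have h1 : d + (n + ℓ - 2) + 1 = M := by omega
        have h2 : n + ℓ - 2 + 1 = n + ℓ - 1 := by omega
        rw [h1, h2] at h
        exact h
      refine ⟨x, ?_, ?_⟩
      · rw [← Finset.sum_subset hsub (fun k hk hk' => by rw [hx0 k hk hk', mul_zero]),
          Finset.sum_pair hab.ne]
        have hxa : x a = (Nat.fib d : ℤ) := by simp [hxdef, hab.ne]
        have hxb : x b = (Nat.fib (d + 1) : ℤ) := by simp [hxdef]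
        rw [hxa, hxb, hfib]
        push_cast
        ring
      · rw [← Finset.sum_subset hsub (fun k hk hk' => by rw [hx0 k hk hk']; rfl),
          Finset.sum_pair hab.ne]
        have hxa : x a = (Nat.fib d : ℤ) := by simp [hxdef, hab.ne]
        have hxb : x b = (Nat.fib (d + 1) : ℤ) := by simp [hxdef]
        rw [hxa, hxb]
        simp only [Int.natAbs_natCast]
        have h3 : M - n - ℓ + 3 = d + 2 := by omega
        rw [h3, Nat.fib_add_two]
  have hQle : Q (fibSet n ℓ) (Nat.fib M) ≤ Nat.fib (M - n - ℓ + 3) := Nat.sInf_le hmem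
  have hQmem : Q (fibSet n ℓ) (Nat.fib M) ∈ S := Nat.sInf_mem ⟨_, hmem⟩
  refine ⟨?_, hQle, Nat.fib_mono (by omega)⟩
  -- lower bound
  obtain ⟨x, hx1, hx2⟩ := hQmem
  have hkey : (Nat.fib M : ℤ) ≤ (Nat.fib (n + ℓ - 1) : ℤ) * (Q (fibSet n ℓ) (Nat.fib M) : ℤ) := by
    calc (Nat.fib M : ℤ) = ∑ k ∈ fibSet n ℓ, (k : ℤ) * x k := hx1
      _ ≤ |∑ k ∈ fibSet n ℓ, (k : ℤ) * x k| := le_abs_self _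
      _ ≤ ∑ k ∈ fibSet n ℓ, |(k : ℤ) * x k| := Finset.abs_sum_le_sum_abs _ _
      _ ≤ ∑ k ∈ fibSet n ℓ, (Nat.fib (n + ℓ - 1) : ℤ) * |x k| := by
          refine Finset.sum_le_sum fun k hk => ?_
          rw [abs_mul]
          refine mul_le_mul_of_nonneg_right ?_ (abs_nonneg _)
          obtain ⟨j, hj, rfl⟩ := Finset.mem_image.1 hk
          rw [abs_of_nonneg (by positivity)]
          exact_mod_cast Nat.fib_mono (by have := Finset.mem_range.1 hj; omega)
      _ = (Nat.fib (n + ℓ - 1) : ℤ) * (Q (fibSet n ℓ) (Nat.fib M) : ℤ) := by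
          rw [← Finset.mul_sum, hx2]
          push_cast [Int.natCast_natAbs]
          ring
  rw [div_le_iff₀ (by exact_mod_cast hfibpos)]
  calc (Nat.fib M : ℝ) ≤ (Nat.fib (n + ℓ - 1) : ℝ) * (Q (fibSet n ℓ) (Nat.fib M) : ℝ) := by
        exact_mod_cast hkey
    _ = _ := mul_comm _ _
end
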